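/- A_BKKS is not determinisable by pruning: there is no deterministic Büchi automaton B obtained from A_BKKS by removing transitions (that is, with the same states and initial state as A_BKKS, transition set Δ' ⊆ Δ, and significant transitions F ∩ Δ') such that L(B) = L(A_BKKS). -/

import Mathlib

/-- A (nondeterministic) Büchi/coBüchi automaton: an initial state, a set of
transitions, and a subset of *significant* transitions. -/
structure BuchiAutomaton (σ : Type) (Q : Type) where
  init : Q
  trans : Set (Q × σ × Q)
  sig : Set (Q × σ × Q)
  sig_sub : sig ⊆ trans

namespace BuchiAutomaton

variable {σ Q : Type}

/-- `ρ` is a run of `A` on the infinite word `w`, starting at the state `p`. -/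
def IsRunFrom (A : BuchiAutomaton σ Q) (p : Q) (w : ℕ → σ) (ρ : ℕ → Q) : Prop :=
  ρ 0 = p ∧ ∀ i, (ρ i, w i, ρ (i + 1)) ∈ A.trans

/-- Büchi acceptance: the run contains infinitely many significant transitions. -/
def BuchiAcc (A : BuchiAutomaton σ Q) (w : ℕ → σ) (ρ : ℕ → Q) : Prop :=
  ∀ N, ∃ i, N ≤ i ∧ (ρ i, w i, ρ (i + 1)) ∈ A.sig

/-- coBüchi acceptance: the run contains finitely many significant transitions. -/
def CoBuchiAcc (A : BuchiAutomaton σ Q) (w : ℕ → σ) (ρ : ℕ → Q) : Prop :=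
  ∃ N, ∀ i, N ≤ i → (ρ i, w i, ρ (i + 1)) ∉ A.sig

/-- The language of `A` (as a Büchi automaton), with initial state `p`. -/
def LangFrom (A : BuchiAutomaton σ Q) (p : Q) : Set (ℕ → σ) :=
  {w | ∃ ρ, A.IsRunFrom p w ρ ∧ A.BuchiAcc w ρ}

/-- The language of `A`, read as a Büchi automaton. -/
def Lang (A : BuchiAutomaton σ Q) : Set (ℕ → σ) :=
  A.LangFrom A.init

/-- The language of `A`, read as a coBüchi automaton. -/
def CoLang (A : BuchiAutomaton σ Q) : Set (ℕ → σ) :=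
  {w | ∃ ρ, A.IsRunFrom A.init w ρ ∧ A.CoBuchiAcc w ρ}

/-- `A` is deterministic: at most one outgoing transition per state and letter. -/
def Deterministic (A : BuchiAutomaton σ Q) : Prop :=
  ∀ p a q q', (p, a, q) ∈ A.trans → (p, a, q') ∈ A.trans → q = q'

/-- `FinRun A l p`: `l` is a finite run of `A` from the initial state, ending in
the state `p` (represented as the chronological list of its transitions). -/
inductive FinRun (A : BuchiAutomaton σ Q) : List (Q × σ × Q) → Q → Prop
  | nil : FinRun A [] A.init
  | snoc {l : List (Q × σ × Q)} {p : Q} {a : σ} {q : Q} :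
      FinRun A l p → (p, a, q) ∈ A.trans → FinRun A (l ++ [(p, a, q)]) q

/-- A resolver for `A`: a function from finite runs and letters to transitions,
such that on every finite run from the initial state ending in a state `p` and
every letter `a`, it outputs a transition on `a` with source `p`. -/
structure Resolver (A : BuchiAutomaton σ Q) where
  res : List (Q × σ × Q) → σ → Q × σ × Q
  res_valid : ∀ l p a, A.FinRun l p →
    (res l a).1 = p ∧ (res l a).2.1 = a ∧ res l a ∈ A.trans

/-- The history (finite run) built by a resolver after reading `n` letters of `w`. -/
def Resolver.hist {A : BuchiAutomaton σ Q} (r : Resolver A) (w : ℕ → σ) : ℕ → List (Q × σ × Q)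
  | 0 => []
  | n + 1 => r.hist w n ++ [r.res (r.hist w n) (w n)]

/-- The run induced by the resolver on `w` satisfies the Büchi condition. -/
def Resolver.InducedBuchiAcc {A : BuchiAutomaton σ Q} (r : Resolver A) (w : ℕ → σ) : Prop :=
  ∀ N, ∃ n, N ≤ n ∧ r.res (r.hist w n) (w n) ∈ A.sig

/-- The run induced by the resolver on `w` satisfies the coBüchi condition. -/
def Resolver.InducedCoBuchiAcc {A : BuchiAutomaton σ Q} (r : Resolver A) (w : ℕ → σ) : Prop :=
  ∃ N, ∀ n, N ≤ n → r.res (r.hist w n) (w n) ∉ A.sig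

/-- `A` is history-deterministic (as a Büchi automaton). -/
def HistoryDeterministic (A : BuchiAutomaton σ Q) : Prop :=
  ∃ r : Resolver A, ∀ w ∈ A.Lang, r.InducedBuchiAcc w

/-- `A` is history-deterministic (as a coBüchi automaton). -/
def CoHistoryDeterministic (A : BuchiAutomaton σ Q) : Prop :=
  ∃ r : Resolver A, ∀ w ∈ A.CoLang, r.InducedCoBuchiAcc w

end BuchiAutomaton

/-- The alphabet `{x, a, b}`. -/
inductive XAB : Type
  | x | a | b
deriving DecidableEq

/-- The states of the automaton `A_BKKS`. -/
inductive BSt : Type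
  | I | ia | ib | pa | pb | pa' | pb'
deriving DecidableEq

open XAB BSt in
/-- The Büchi automaton `A_BKKS`. -/
def Abkks : BuchiAutomaton XAB BSt where
  init := I
  trans := ({(ia, a, pa), (ib, b, pb), (pa', a, I), (pb', b, I)} : Set (BSt × XAB × BSt)) ∪
    ({(I, x, ia), (I, x, ib), (ia, b, I), (ib, a, I),
      (pa, x, pa'), (pb, x, pb'), (pa', b, pb), (pb', a, pa)} : Set (BSt × XAB × BSt))
  sig := {(ia, a, pa), (ib, b, pb), (pa', a, I), (pb', b, I)}
  sig_sub := Set.subset_union_left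

open XAB in
/-- `L_BKKS`: the infinite words of the form `(xa + xb)^ω` containing
infinitely many occurrences of the infix `xaxa` or infinitely many occurrences
of the infix `xbxb`. -/
def L_BKKS : Set (ℕ → XAB) :=
  {w | (∀ n, w (2 * n) = x ∧ (w (2 * n + 1) = a ∨ w (2 * n + 1) = b)) ∧
    ((∀ N, ∃ i, N ≤ i ∧ w i = x ∧ w (i + 1) = a ∧ w (i + 2) = x ∧ w (i + 3) = a) ∨
     (∀ N, ∃ i, N ≤ i ∧ w i = x ∧ w (i + 1) = b ∧ w (i + 2) = x ∧ w (i + 3) = b))}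

/-!
A deterministic pruning of `A_BKKS` keeps at most one of the two transitions `(I, x, ι_a)` and
`(I, x, ι_b)`. If it drops `(I, x, ι_a)`, its only run on `(xa)^ω` alternates between `I` and
`ι_b` and sees no significant transition, whereas `A_BKKS` accepts `(xa)^ω` along the cycle
`I ι_a p_a p'_a`. Symmetrically, dropping `(I, x, ι_b)` loses `(xb)^ω`.
-/

open XAB BSt

def altWord {σ : Type} (u v : σ) : ℕ → σ := fun n => if n % 2 = 0 then u else v

@[simp]
theorem altWord_two_mul {σ : Type} (u v : σ) (n : ℕ) : altWord u v (2 * n) = u := by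
  simp [altWord]

@[simp]
theorem altWord_two_mul_add_one {σ : Type} (u v : σ) (n : ℕ) : altWord u v (2 * n + 1) = v := by
  simp [altWord, Nat.add_mod]

namespace BuchiAutomaton

variable {σ Q : Type} {A : BuchiAutomaton σ Q} {u v : σ}

@[simps]
def prune (A : BuchiAutomaton σ Q) (Δ' : Set (Q × σ × Q)) : BuchiAutomaton σ Q :=
  ⟨A.init, Δ', A.sig ∩ Δ', Set.inter_subset_right⟩

theorem altWord_mem_langFrom_of_cycle {p₀ p₁ p₂ p₃ : Q} (h₀ : (p₀, u, p₁) ∈ A.trans)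
    (h₁ : (p₁, v, p₂) ∈ A.sig) (h₂ : (p₂, u, p₃) ∈ A.trans) (h₃ : (p₃, v, p₀) ∈ A.trans) :
    altWord u v ∈ A.LangFrom p₀ := by
  let ρ : ℕ → Q := fun n => ![p₀, p₁, p₂, p₃] ⟨n % 4, by omega⟩
  refine ⟨ρ, ⟨rfl, fun i => ?_⟩, fun N => ⟨4 * N + 1, by omega, ?_⟩⟩
  · obtain ⟨k, r, hr, rfl⟩ : ∃ k r, r < 4 ∧ i = 4 * k + r := ⟨i / 4, i % 4, by omega, by omega⟩
    have hk : 4 * k % 2 = 0 := by omega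
    interval_cases r <;> simp [ρ, altWord, Nat.add_mod, hk, h₀, A.sig_sub h₁, h₂, h₃]
  · have hN : (4 * N + 1) % 2 = 1 := by omega
    simpa [ρ, altWord, Nat.add_mod, hN] using h₁

theorem IsRunFrom.altWord_alternates {p q : Q} (hpq : ∀ q', (p, u, q') ∈ A.trans → q' = q)
    (hqp : ∀ p', (q, v, p') ∈ A.trans → p' = p) {ρ : ℕ → Q} (hρ : A.IsRunFrom p (altWord u v) ρ) :
    ∀ n, ρ (2 * n) = p ∧ ρ (2 * n + 1) = q := by
  obtain ⟨hρ₀, hstep⟩ := hρ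
  have hodd : ∀ n, ρ (2 * n) = p → ρ (2 * n + 1) = q := fun n h =>
    hpq _ (by simpa [h] using hstep (2 * n))
  intro n
  induction n with
  | zero => exact ⟨hρ₀, hodd 0 hρ₀⟩
  | succ n ih =>
    have heven : ρ (2 * (n + 1)) = p := hqp _ (by simpa [ih.2, mul_add] using hstep (2 * n + 1))
    exact ⟨heven, hodd _ heven⟩

theorem altWord_not_mem_langFrom {p q : Q} (hpq : ∀ q', (p, u, q') ∈ A.trans → q' = q)
    (hqp : ∀ p', (q, v, p') ∈ A.trans → p' = p) (hu : (p, u, q) ∉ A.sig)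
    (hv : (q, v, p) ∉ A.sig) : altWord u v ∉ A.LangFrom p := by
  rintro ⟨ρ, hρ, hacc⟩
  have halt := hρ.altWord_alternates hpq hqp
  obtain ⟨i, -, hi⟩ := hacc 0
  obtain ⟨n, rfl | rfl⟩ := Nat.even_or_odd' i
  · rw [(halt n).1, (halt n).2, altWord_two_mul] at hi
    exact hu hi
  · rw [(halt n).2, altWord_two_mul_add_one, show 2 * n + 1 + 1 = 2 * (n + 1) by ring,
      (halt (n + 1)).1] at hi
    exact hv hi

end BuchiAutomaton

namespace Abkks

theorem altWord_x_a_mem_lang : altWord x a ∈ Abkks.Lang :=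
  BuchiAutomaton.altWord_mem_langFrom_of_cycle (p₁ := ia) (p₂ := pa) (p₃ := pa')
    (by simp [Abkks]) (by simp [Abkks]) (by simp [Abkks]) (by simp [Abkks])

theorem altWord_x_b_mem_lang : altWord x b ∈ Abkks.Lang :=
  BuchiAutomaton.altWord_mem_langFrom_of_cycle (p₁ := ib) (p₂ := pb) (p₃ := pb')
    (by simp [Abkks]) (by simp [Abkks]) (by simp [Abkks]) (by simp [Abkks])

variable {Δ' : Set (BSt × XAB × BSt)}

theorem I_x_ia_mem_of_altWord_mem_lang_prune (hsub : Δ' ⊆ Abkks.trans)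
    (h : altWord x a ∈ (Abkks.prune Δ').Lang) : (I, x, ia) ∈ Δ' := by
  by_contra hdrop
  refine BuchiAutomaton.altWord_not_mem_langFrom (q := ib) (fun q hq => ?_) (fun p hp => ?_)
    (by simp [Abkks]) (by simp [Abkks]) h
  · obtain rfl | rfl : q = ia ∨ q = ib := by simpa [Abkks] using hsub hq
    exacts [absurd hq hdrop, rfl]
  · simpa [Abkks] using hsub hp

theorem I_x_ib_mem_of_altWord_mem_lang_prune (hsub : Δ' ⊆ Abkks.trans)
    (h : altWord x b ∈ (Abkks.prune Δ').Lang) : (I, x, ib) ∈ Δ' := by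
  by_contra hdrop
  refine BuchiAutomaton.altWord_not_mem_langFrom (q := ia) (fun q hq => ?_) (fun p hp => ?_)
    (by simp [Abkks]) (by simp [Abkks]) h
  · obtain rfl | rfl : q = ia ∨ q = ib := by simpa [Abkks] using hsub hq
    exacts [rfl, absurd hq hdrop]
  · simpa [Abkks] using hsub hp

end Abkks

/-- `A_BKKS` is not determinisable by pruning: no deterministic
Büchi automaton obtained from `A_BKKS` by removing transitions (keeping the same
states and initial state, a transition set `Δ' ⊆ Δ`, and significant transitions
`F ∩ Δ'`) recognises `L(A_BKKS)`. -/
theorem Abkks_not_determinisable_by_pruning :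
    ¬ ∃ (Δ' : Set (BSt × XAB × BSt)) (h : Δ' ⊆ Abkks.trans),
      (BuchiAutomaton.mk Abkks.init Δ' (Abkks.sig ∩ Δ') Set.inter_subset_right).Deterministic ∧
      (BuchiAutomaton.mk Abkks.init Δ' (Abkks.sig ∩ Δ') Set.inter_subset_right).Lang =
        Abkks.Lang := by
  rintro ⟨Δ', hsub, hdet, hlang⟩
  have hprune : (Abkks.prune Δ').Lang = Abkks.Lang := hlang
  have hia := Abkks.I_x_ia_mem_of_altWord_mem_lang_prune hsub (hprune ▸ Abkks.altWord_x_a_mem_lang)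
  have hib := Abkks.I_x_ib_mem_of_altWord_mem_lang_prune hsub (hprune ▸ Abkks.altWord_x_b_mem_lang)
  exact absurd (hdet I x ia ib hia hib) (by decide)
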